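/- Let Φ be a minimal homeomorphism of a Cantor space S and let S' ⊆ S be a nonempty clopen subset. For every continuous function g : S' → ℤ there exists a continuous function f : S → ℤ vanishing outside Φ^{-1}(S') such that ι(f) = g, i.e. Σ_{k=0}^{τ(y)−1} f(Φᵏ(y)) = g(y) for every y ∈ S'. -/

import Mathlib

/-!
Take `f = (1_{S'}·(g ∘ ρ)) ∘ Φ`, where `ρ` is the first return map of `Φ⁻¹` to `S'`.
On the tower `y, Φ y, …, Φ^{τ(y)-1} y` over `y ∈ S'` only the top point is mapped into `S'`,
and `ρ` sends its image `Φ^{τ(y)} y` back to `y`; hence `ι(f)(y) = g(y)`. Compactness and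
minimality make every point return to `S'` in both directions, and return times to a clopen
set are then locally constant, so `ρ` and `f` are continuous.
-/

open Set

/-- First return time of `Φ` to the set `T`: `min {n ≥ 1 | Φⁿ(y) ∈ T}`. -/
noncomputable def retTime {S : Type*} (Φ : S → S) (T : Set S) (y : S) : ℕ :=
  sInf {n : ℕ | 1 ≤ n ∧ Φ^[n] y ∈ T}

/-- Induced (first return) map of `Φ` on the set `T`: `y ↦ Φ^{retTime}(y)`. -/
noncomputable def indMap {S : Type*} (Φ : S → S) (T : Set S) (y : S) : S :=
  Φ^[retTime Φ T y] y

/-- A homeomorphism is *minimal* if every orbit is dense. -/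
def Homeomorph.IsMinimal {S : Type*} [TopologicalSpace S] (Φ : S ≃ₜ S) : Prop :=
  ∀ x : S, Dense {y : S | ∃ n : ℕ, (⇑Φ)^[n] x = y ∨ (⇑Φ.symm)^[n] x = y}

section ReturnTime

variable {S : Type*} {φ ψ : S → S} {T : Set S} {y : S}

theorem one_le_retTime (h : ∃ n, 1 ≤ n ∧ φ^[n] y ∈ T) : 1 ≤ retTime φ T y :=
  (Nat.sInf_mem h).1

theorem iterate_retTime_mem (h : ∃ n, 1 ≤ n ∧ φ^[n] y ∈ T) : φ^[retTime φ T y] y ∈ T :=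
  (Nat.sInf_mem h).2

theorem iterate_notMem_of_lt_retTime {k : ℕ} (hk₁ : 1 ≤ k) (hk : k < retTime φ T y) :
    φ^[k] y ∉ T :=
  fun hkT => Nat.notMem_of_lt_sInf hk ⟨hk₁, hkT⟩

theorem retTime_eq_of_forall_notMem {n : ℕ} (hn₁ : 1 ≤ n) (hnT : φ^[n] y ∈ T)
    (hlt : ∀ k, 1 ≤ k → k < n → φ^[k] y ∉ T) : retTime φ T y = n :=
  le_antisymm (Nat.sInf_le ⟨hn₁, hnT⟩)
    (le_csInf ⟨n, hn₁, hnT⟩ fun _ hm => not_lt.mp fun hmn => hlt _ hm.1 hmn hm.2)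

theorem sum_range_retTime_indicator {M : Type*} [AddCommMonoid M] (F : S → M)
    (h : ∃ n, 1 ≤ n ∧ φ^[n] y ∈ T) :
    ∑ k ∈ Finset.range (retTime φ T y), T.indicator F (φ^[k + 1] y) = F (indMap φ T y) := by
  obtain ⟨n, hn⟩ : ∃ n, retTime φ T y = n + 1 := Nat.exists_eq_add_of_le' (one_le_retTime h)
  have hmiddle : ∀ k ∈ Finset.range n, T.indicator F (φ^[k + 1] y) = 0 := fun k hk =>
    indicator_of_notMem (iterate_notMem_of_lt_retTime k.succ_pos
      (by rw [hn]; exact Nat.succ_lt_succ (Finset.mem_range.mp hk))) F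
  rw [hn, Finset.sum_range_succ, Finset.sum_eq_zero hmiddle, zero_add, ← hn,
    indicator_of_mem (iterate_retTime_mem h), indMap]

theorem Function.LeftInverse.iterate_apply_iterate_of_le (hψ : Function.LeftInverse ψ φ)
    {m n : ℕ} (hmn : m ≤ n) (x : S) : ψ^[m] (φ^[n] x) = φ^[n - m] x := by
  obtain ⟨k, rfl⟩ := Nat.exists_eq_add_of_le hmn
  rw [Nat.add_sub_cancel_left, Function.iterate_add_apply, hψ.iterate m]

theorem Function.LeftInverse.indMap_indMap (hψ : Function.LeftInverse ψ φ) (hy : y ∈ T)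
    (h : ∃ n, 1 ≤ n ∧ φ^[n] y ∈ T) : indMap ψ T (indMap φ T y) = y := by
  set n := retTime φ T y
  have hback : ψ^[n] (φ^[n] y) = y := by
    rw [hψ.iterate_apply_iterate_of_le le_rfl, Nat.sub_self, Function.iterate_zero_apply]
  have hret : retTime ψ T (φ^[n] y) = n := by
    refine retTime_eq_of_forall_notMem (one_le_retTime h) (by rwa [hback]) fun k hk₁ hkn => ?_
    rw [hψ.iterate_apply_iterate_of_le hkn.le]
    exact iterate_notMem_of_lt_retTime (by omega) (by omega)
  rw [indMap, indMap, hret, hback]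

variable [TopologicalSpace S]

theorem isLocallyConstant_retTime (hφ : Continuous φ) (hT : IsClopen T)
    (h : ∀ x, ∃ n, 1 ≤ n ∧ φ^[n] x ∈ T) : IsLocallyConstant (retTime φ T) := by
  refine (IsLocallyConstant.iff_eventually_eq _).mpr fun x => ?_
  have hmem : ∀ᶠ z in nhds x, φ^[retTime φ T x] z ∈ T :=
    (hφ.iterate _).continuousAt.preimage_mem_nhds
      (hT.isOpen.mem_nhds (iterate_retTime_mem (h x)))
  have hnotMem : ∀ᶠ z in nhds x, ∀ k ∈ Finset.Ico 1 (retTime φ T x), φ^[k] z ∉ T :=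
    (Filter.eventually_all_finset _).mpr fun k hk =>
      (hφ.iterate k).continuousAt.preimage_mem_nhds (hT.isClosed.isOpen_compl.mem_nhds
        (iterate_notMem_of_lt_retTime (Finset.mem_Ico.mp hk).1 (Finset.mem_Ico.mp hk).2))
  filter_upwards [hmem, hnotMem] with z hzT hz
  exact retTime_eq_of_forall_notMem (one_le_retTime (h x)) hzT fun k hk₁ hkn =>
    hz k (Finset.mem_Ico.mpr ⟨hk₁, hkn⟩)

theorem continuous_indMap (hφ : Continuous φ) (hT : IsClopen T)
    (h : ∀ x, ∃ n, 1 ≤ n ∧ φ^[n] x ∈ T) : Continuous (indMap φ T) := by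
  refine continuous_iff_continuousAt.mpr fun x =>
    (hφ.iterate (retTime φ T x)).continuousAt.congr ?_
  filter_upwards [(IsLocallyConstant.iff_eventually_eq _).mp
    (isLocallyConstant_retTime hφ hT h) x] with z hz
  rw [indMap, hz]

end ReturnTime

namespace Homeomorph.IsMinimal

variable {S : Type*} [TopologicalSpace S] {Φ : S ≃ₜ S} {U : Set S}

theorem symm (hΦ : Φ.IsMinimal) : Φ.symm.IsMinimal := by
  intro x
  simpa only [Homeomorph.symm_symm, or_comm] using hΦ x

theorem exists_bound_iterate_mem [CompactSpace S] (hΦ : Φ.IsMinimal) (hU : IsOpen U)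
    (hne : U.Nonempty) : ∃ N, ∀ x, ∃ n ≤ N, (⇑Φ)^[n] x ∈ U ∨ (⇑Φ.symm)^[n] x ∈ U := by
  let V : ℕ → Set S := fun n => (⇑Φ)^[n] ⁻¹' U ∪ (⇑Φ.symm)^[n] ⁻¹' U
  have hV : ∀ n, IsOpen (V n) := fun n =>
    (hU.preimage (Φ.continuous.iterate n)).union (hU.preimage (Φ.symm.continuous.iterate n))
  have hcover : univ ⊆ ⋃ n, V n := fun x _ => by
    obtain ⟨_, ⟨n, hn⟩, hyU⟩ := (hΦ x).exists_mem_open hU hne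
    exact mem_iUnion.mpr ⟨n, by rcases hn with rfl | rfl <;> simp [V, hyU]⟩
  obtain ⟨t, ht⟩ := isCompact_univ.elim_finite_subcover V hV hcover
  refine ⟨t.sup id, fun x => ?_⟩
  obtain ⟨n, hnt, hxn⟩ := mem_iUnion₂.mp (ht (mem_univ x))
  exact ⟨n, Finset.le_sup (f := id) hnt, hxn⟩

/-- Apply the uniform bound `N` at `Φ^{N+1} x`: either visit is then a positive forward
iterate of `x`. -/
theorem exists_pos_iterate_mem [CompactSpace S] (hΦ : Φ.IsMinimal) (hU : IsOpen U)
    (hne : U.Nonempty) (x : S) : ∃ n, 1 ≤ n ∧ (⇑Φ)^[n] x ∈ U := by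
  obtain ⟨N, hN⟩ := hΦ.exists_bound_iterate_mem hU hne
  obtain ⟨n, hnN, hxU | hxU⟩ := hN ((⇑Φ)^[N + 1] x)
  · exact ⟨n + (N + 1), by omega, by rwa [Function.iterate_add_apply]⟩
  · refine ⟨N + 1 - n, by omega, ?_⟩
    rwa [Function.LeftInverse.iterate_apply_iterate_of_le Φ.symm_apply_apply (by omega)]
      at hxU

end Homeomorph.IsMinimal

theorem exists_preimage_of_sum_over_tower_general {S : Type*} [TopologicalSpace S] [CompactSpace S]
    (Φ : S ≃ₜ S) (hmin : Φ.IsMinimal)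
    (S' : Set S) (hS' : IsClopen S') (hne : S'.Nonempty)
    (g : S' → ℤ) (hg : Continuous g) :
    ∃ f : S → ℤ, Continuous f ∧ (∀ y : S, Φ y ∉ S' → f y = 0) ∧
      ∀ y : S', ∑ k ∈ Finset.range (retTime (⇑Φ) S' (y : S)), f ((⇑Φ)^[k] (y : S)) = g y := by
  have hfwd := hmin.exists_pos_iterate_mem hS'.isOpen hne
  have hbwd := hmin.symm.exists_pos_iterate_mem hS'.isOpen hne
  let back : S → S' := fun x => ⟨indMap Φ.symm S' x, iterate_retTime_mem (hbwd x)⟩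
  have hback : Continuous back :=
    (continuous_indMap Φ.symm.continuous hS' hbwd).subtype_mk _
  refine ⟨fun y => S'.indicator (g ∘ back) (Φ y), (hS'.continuous_indicator
    (hg.comp hback)).comp Φ.continuous, fun y hy => indicator_of_notMem hy _, fun y => ?_⟩
  simp only [← Function.iterate_succ_apply' (⇑Φ)]
  rw [sum_range_retTime_indicator _ (hfwd y)]
  exact congrArg g (Subtype.ext
    (Function.LeftInverse.indMap_indMap Φ.symm_apply_apply y.2 (hfwd y)))

/-- every continuous `g : S' → ℤ` is of the form `ι(f)` for some continuous
`f : S → ℤ` vanishing outside `Φ⁻¹(S')`. -/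
theorem exists_preimage_of_sum_over_tower {S : Type*} [TopologicalSpace S] [CompactSpace S]
    [TopologicalSpace.MetrizableSpace S] [TotallyDisconnectedSpace S] [Nonempty S]
    [PerfectSpace S]
    (Φ : S ≃ₜ S) (hmin : Φ.IsMinimal)
    (S' : Set S) (hS' : IsClopen S') (hne : S'.Nonempty)
    (g : S' → ℤ) (hg : Continuous g) :
    ∃ f : S → ℤ, Continuous f ∧ (∀ y : S, Φ y ∉ S' → f y = 0) ∧
      ∀ y : S', ∑ k ∈ Finset.range (retTime (⇑Φ) S' (y : S)), f ((⇑Φ)^[k] (y : S)) = g y :=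
  exists_preimage_of_sum_over_tower_general Φ hmin S' hS' hne g hg
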